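/- Let ⟨A,∧,∨,→,∼,1⟩ be a Nelson algebra. Then for all x,y,z in A: x↣(x↣(y↣(y↣z))) = (x∧y)↣((x∧y)↣z), where x↣y:=(x→y)∧(∼y→∼x). -/

import Mathlib

/-- A Nelson algebra ⟨A,∧,∨,→,∼,1⟩ of type (2,2,2,1,0). -/
structure NelsonAlgebra (A : Type*) where
  meet : A → A → A
  join : A → A → A
  imp : A → A → A
  neg : A → A
  one : A
  n1 : ∀ x y, meet x (join x y) = x
  n2 : ∀ x y z, meet x (join y z) = join (meet z x) (meet y x)
  n3 : ∀ x, neg (neg x) = x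
  n4 : ∀ x y, neg (meet x y) = join (neg x) (neg y)
  n5 : ∀ x y, meet x (neg x) = meet (meet x (neg x)) (join y (neg y))
  n6 : ∀ x, imp x x = one
  n7 : ∀ x y, meet x (imp x y) = meet x (join (neg x) y)
  n8 : ∀ x y z, imp (meet x y) z = imp x (imp y z)

/-- The weak implication x↣y := (x→y)∧(∼y→∼x). -/
def NelsonAlgebra.wimp {A : Type*} (N : NelsonAlgebra A) (x y : A) : A :=
  N.meet (N.imp x y) (N.imp (N.neg y) (N.neg x))

/-!
(N1)–(N2) are Sholander's axioms for distributive lattices, ∼ is a De Morgan involution and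
(N5) is the Kleene condition. In this setting `a → b` is the largest `t` with
`t ∧ a ≤ ∼a ∨ b`. Hence `→` distributes over `∧` on the right, turns `∨` on the left into `∧`,
satisfies `∼(a → b) → t = (a ∧ ∼b) → t`, and `a → ∼b = a → ∼a` whenever `a ≤ b`. These rules
reduce `a ↣ (a ↣ c)` to `(a → c) ∧ ¬(a ∧ ∼c)` with `¬u := u → ∼u`, and thereby both sides of
the identity to `(x ∧ y → z) ∧ ¬(x ∧ y ∧ ∼z)`.
-/

theorem le_of_le_sup_of_inf_le {L : Type*} [DistribLattice L] {t s u : L}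
    (h₁ : t ≤ s ⊔ u) (h₂ : t ⊓ s ≤ u) : t ≤ u :=
  calc t ≤ t ⊓ (s ⊔ u) := le_inf le_rfl h₁
    _ = t ⊓ s ⊔ t ⊓ u := inf_sup_left _ _ _
    _ ≤ u := sup_le h₂ inf_le_right

namespace NelsonAlgebra

variable {A : Type*} (N : NelsonAlgebra A)

theorem join_meet_meet_self (x y : A) : N.join (N.meet y x) (N.meet x x) = x := by
  rw [← N.n2 x x y, N.n1]

theorem meet_self (x : A) : N.meet x x = x := by
  have h₁ := N.join_meet_meet_self x x
  have h₂ : N.meet (N.meet x x) x = N.meet x x := by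
    simpa only [h₁] using N.n1 (N.meet x x) (N.meet x x)
  simpa only [h₁, h₂] using N.n2 x (N.meet x x) (N.meet x x)

theorem join_meet_self (x y : A) : N.join (N.meet y x) x = x := by
  simpa only [N.meet_self] using N.join_meet_meet_self x y

theorem join_self (x : A) : N.join x x = x := by
  simpa only [N.meet_self] using N.join_meet_meet_self x x

theorem meet_comm (x y : A) : N.meet x y = N.meet y x := by
  simpa only [N.join_self] using N.n2 x y y

theorem neg_join (x y : A) : N.neg (N.join x y) = N.meet (N.neg x) (N.neg y) := by
  rw [← N.n3 (N.meet _ _), N.n4, N.n3, N.n3]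

theorem join_comm (x y : A) : N.join x y = N.join y x := by
  rw [← N.n3 (N.join x y), N.neg_join, N.meet_comm, ← N.neg_join, N.n3]

theorem meet_eq_left_trans {a b c : A} (hab : N.meet a b = a) (hbc : N.meet b c = b) :
    N.meet a c = a := by
  have hc : N.join b c = c := by rw [← hbc, N.join_meet_self]
  rw [← hc, N.n2, N.meet_comm b, hab, N.join_meet_self]

theorem meet_meet_of_meet_eq {a b c : A} (hca : N.meet c a = c) (hcb : N.meet c b = c) :
    N.meet c (N.meet a b) = c := by
  have hb : N.join c b = b := by rw [← hcb, N.join_meet_self]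
  have hab : N.meet a b = N.join c (N.meet a b) :=
    calc N.meet a b = N.meet a (N.join c b) := by rw [hb]
      _ = N.join (N.meet b a) c := by rw [N.n2, hca]
      _ = N.join c (N.meet a b) := by rw [N.join_comm, N.meet_comm b]
  rw [hab, N.n1]

theorem meet_join_of_meet_eq {a b c : A} (hac : N.meet a c = a) (hbc : N.meet b c = b) :
    N.meet (N.join a b) c = N.join a b := by
  rw [N.meet_comm _ c, N.n2, hac, hbc, N.join_comm]

theorem meet_join_right (a b : A) : N.meet b (N.join a b) = b := by
  rw [N.join_comm, N.n1]

theorem meet_meet_left (a b : A) : N.meet (N.meet a b) a = N.meet a b := by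
  have h : N.join (N.meet a b) a = a := by rw [N.meet_comm, N.join_meet_self]
  simpa only [h] using N.n1 (N.meet a b) a

theorem meet_meet_right (a b : A) : N.meet (N.meet a b) b = N.meet a b := by
  simpa only [N.join_meet_self] using N.n1 (N.meet a b) b

/-- On `N.Carrier` the notation `⊓ ⊔ ᶜ ⇨ ⊤` stands for the Nelson operations `∧ ∨ ∼ → 1`:
`ᶜ` is the strong negation and `⇨` is not a Heyting implication. -/
def Carrier (_ : NelsonAlgebra A) : Type _ := A

instance : Lattice N.Carrier where
  le a b := N.meet a b = a
  le_refl := N.meet_self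
  le_trans _ _ _ := N.meet_eq_left_trans
  le_antisymm a b hab hba := hab.symm.trans ((N.meet_comm a b).trans hba)
  sup := N.join
  inf := N.meet
  le_sup_left := N.n1
  le_sup_right := N.meet_join_right
  sup_le _ _ _ := N.meet_join_of_meet_eq
  inf_le_left := N.meet_meet_left
  inf_le_right := N.meet_meet_right
  le_inf _ _ _ := N.meet_meet_of_meet_eq

instance : DistribLattice N.Carrier :=
  DistribLattice.ofInfSupLe fun a b c => by
    have h : a ⊓ (b ⊔ c) = c ⊓ a ⊔ b ⊓ a := N.n2 a b c
    rw [h, inf_comm c, inf_comm b, sup_comm]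

instance : Compl N.Carrier := ⟨N.neg⟩

instance : HImp N.Carrier := ⟨N.imp⟩

instance : Top N.Carrier := ⟨N.one⟩

variable {a b c t : N.Carrier}

theorem compl_compl (a : N.Carrier) : aᶜᶜ = a := N.n3 a

theorem compl_inf (a b : N.Carrier) : (a ⊓ b)ᶜ = aᶜ ⊔ bᶜ := N.n4 a b

theorem compl_sup (a b : N.Carrier) : (a ⊔ b)ᶜ = aᶜ ⊓ bᶜ := N.neg_join a b

theorem inf_compl_le_sup_compl (a b : N.Carrier) : a ⊓ aᶜ ≤ b ⊔ bᶜ :=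
  inf_eq_left.mp (N.n5 a b).symm

theorem himp_self (a : N.Carrier) : a ⇨ a = ⊤ := N.n6 a

theorem inf_himp (a b : N.Carrier) : a ⊓ (a ⇨ b) = a ⊓ (aᶜ ⊔ b) := N.n7 a b

theorem himp_himp (a b c : N.Carrier) : a ⇨ b ⇨ c = a ⊓ b ⇨ c := (N.n8 a b c).symm

theorem compl_le_compl (h : a ≤ b) : bᶜ ≤ aᶜ := by
  have h' : (a ⊓ b)ᶜ = aᶜ := by rw [inf_eq_left.mpr h]
  rw [N.compl_inf] at h'
  exact sup_eq_left.mp h'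

theorem inf_top_eq (a : N.Carrier) : a ⊓ ⊤ = a := by
  rw [← N.himp_self a, N.inf_himp, inf_sup_left, inf_idem, sup_eq_right]
  exact inf_le_left

theorem himp_himp_self (a b : N.Carrier) : a ⇨ a ⇨ b = a ⇨ b := by
  rw [N.himp_himp, inf_idem]

theorem himp_eq_top_iff : a ⇨ b = ⊤ ↔ a ≤ aᶜ ⊔ b := by
  constructor
  · intro h
    have h' := N.inf_himp a b
    rw [h, N.inf_top_eq] at h'
    exact inf_eq_left.mp h'.symm
  · intro h
    have hle : a ≤ a ⇨ b := inf_eq_left.mp ((N.inf_himp a b).trans (inf_eq_left.mpr h))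
    rw [← N.himp_self (a ⇨ b), N.himp_himp, inf_eq_right.mpr hle]

theorem inf_compl_le_himp (a b : N.Carrier) : a ⊓ aᶜ ≤ a ⇨ b :=
  calc a ⊓ aᶜ ≤ a ⊓ (aᶜ ⊔ (a ⇨ b)) := inf_le_inf_left _ le_sup_left
    _ = a ⊓ (a ⇨ b) := by rw [← N.inf_himp, N.himp_himp_self]
    _ ≤ a ⇨ b := inf_le_right

theorem compl_le_himp (a b : N.Carrier) : aᶜ ≤ a ⇨ b := by
  have h : aᶜ ⇨ a ⇨ b = ⊤ := by
    rw [N.himp_himp, N.himp_eq_top_iff, N.compl_inf, N.compl_compl]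
    exact le_sup_of_le_left (inf_le_left.trans le_sup_right)
  rw [N.himp_eq_top_iff, N.compl_compl] at h
  exact le_of_le_sup_of_inf_le h (inf_comm a aᶜ ▸ N.inf_compl_le_himp a b)

theorem le_himp_iff : t ≤ a ⇨ b ↔ t ⊓ a ≤ aᶜ ⊔ b := by
  constructor
  · intro h
    calc t ⊓ a ≤ a ⊓ (a ⇨ b) := le_inf inf_le_right (inf_le_left.trans h)
      _ = a ⊓ (aᶜ ⊔ b) := N.inf_himp a b
      _ ≤ aᶜ ⊔ b := inf_le_right
  · intro h
    have ht : t ⇨ a ⇨ b = ⊤ := by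
      rw [N.himp_himp, N.himp_eq_top_iff, N.compl_inf]
      exact h.trans (sup_le_sup_right le_sup_right _)
    refine le_of_le_sup_of_inf_le (N.himp_eq_top_iff.mp ht) ?_
    refine le_of_le_sup_of_inf_le
      ((N.inf_compl_le_sup_compl t a).trans (sup_le_sup_left (N.compl_le_himp a b) a)) ?_
    calc t ⊓ tᶜ ⊓ a ≤ a ⊓ (aᶜ ⊔ b) :=
          le_inf inf_le_right ((inf_le_inf_right a inf_le_left).trans h)
      _ = a ⊓ (a ⇨ b) := (N.inf_himp a b).symm
      _ ≤ a ⇨ b := inf_le_right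

theorem himp_inf_distrib (a b c : N.Carrier) : a ⇨ b ⊓ c = (a ⇨ b) ⊓ (a ⇨ c) :=
  eq_of_forall_le_iff fun t => by simp only [le_inf_iff, N.le_himp_iff, sup_inf_left]

theorem inf_le_compl_sup_of_inf_le (ha : t ⊓ a ≤ aᶜ ⊔ c) (hb : t ⊓ b ≤ bᶜ ⊔ c) :
    t ⊓ a ≤ bᶜ ⊔ c := by
  refine le_of_le_sup_of_inf_le (ha.trans (sup_le_sup_left le_sup_right _)) ?_
  have hk : t ⊓ a ⊓ aᶜ ≤ b ⊔ bᶜ :=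
    (inf_le_inf_right _ inf_le_right).trans (N.inf_compl_le_sup_compl a b)
  exact le_of_le_sup_of_inf_le (hk.trans (sup_le_sup_left le_sup_left b))
    ((inf_le_inf_right b (inf_le_left.trans inf_le_left)).trans hb)

theorem sup_himp_distrib (a b c : N.Carrier) : a ⊔ b ⇨ c = (a ⇨ c) ⊓ (b ⇨ c) := by
  refine eq_of_forall_le_iff fun t => ?_
  rw [le_inf_iff, N.le_himp_iff, N.le_himp_iff, N.le_himp_iff, N.compl_sup, inf_sup_left,
    sup_le_iff, sup_inf_right, le_inf_iff, le_inf_iff]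
  exact ⟨fun ⟨⟨ha, _⟩, _, hb⟩ => ⟨ha, hb⟩, fun ⟨ha, hb⟩ =>
    ⟨⟨ha, N.inf_le_compl_sup_of_inf_le ha hb⟩, N.inf_le_compl_sup_of_inf_le hb ha, hb⟩⟩

theorem compl_himp_himp (a b c : N.Carrier) : (a ⇨ b)ᶜ ⇨ c = a ⊓ bᶜ ⇨ c := by
  have hle : aᶜ ⊔ b ≤ a ⇨ b :=
    sup_le (N.compl_le_himp a b) (N.le_himp_iff.mpr (inf_le_left.trans le_sup_right))
  have h₁ : (a ⇨ b)ᶜ ≤ a ⊓ bᶜ := by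
    simpa only [N.compl_sup, N.compl_compl] using N.compl_le_compl hle
  have h₂ : a ⊓ bᶜ ≤ aᶜ ⊔ (a ⇨ b)ᶜ := by
    have h := congrArg compl (N.inf_himp a b)
    rw [N.compl_inf, N.compl_inf, N.compl_sup, N.compl_compl] at h
    exact h ▸ le_sup_right
  refine eq_of_forall_le_iff fun t => ?_
  simp only [N.le_himp_iff, N.compl_compl, N.compl_inf]
  constructor
  · intro h
    refine le_of_le_sup_of_inf_le (s := (a ⇨ b)ᶜ) ?_ ?_
    · calc t ⊓ (a ⊓ bᶜ) ≤ aᶜ ⊔ (a ⇨ b)ᶜ := inf_le_right.trans h₂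
        _ ≤ (a ⇨ b)ᶜ ⊔ (aᶜ ⊔ b ⊔ c) :=
          sup_le (le_sup_of_le_right (le_sup_of_le_left le_sup_left)) le_sup_left
    · calc t ⊓ (a ⊓ bᶜ) ⊓ (a ⇨ b)ᶜ ≤ ((a ⇨ b) ⊔ c) ⊓ a :=
          le_inf ((le_inf (inf_le_left.trans inf_le_left) inf_le_right).trans h)
            (inf_le_left.trans (inf_le_right.trans inf_le_left))
        _ = (a ⇨ b) ⊓ a ⊔ c ⊓ a := inf_sup_right _ _ _
        _ ≤ aᶜ ⊔ b ⊔ c := sup_le_sup (N.le_himp_iff.mp le_rfl) inf_le_left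
  · intro h
    calc t ⊓ (a ⇨ b)ᶜ ≤ t ⊓ (a ⊓ bᶜ) := inf_le_inf_left t h₁
      _ ≤ aᶜ ⊔ b ⊔ c := h
      _ ≤ (a ⇨ b) ⊔ c := sup_le_sup_right hle c

theorem himp_compl_of_le (h : a ≤ b) : a ⇨ bᶜ = a ⇨ aᶜ :=
  eq_of_forall_le_iff fun t => by
    rw [N.le_himp_iff, N.le_himp_iff, sup_idem, sup_eq_left.mpr (N.compl_le_compl h)]

theorem himp_himp_compl_self (a b : N.Carrier) : a ⇨ b ⇨ bᶜ = a ⊓ b ⇨ (a ⊓ b)ᶜ := by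
  rw [N.himp_himp, N.himp_compl_of_le inf_le_right]

theorem wimp_eq (a b : N.Carrier) : N.wimp a b = (a ⇨ b) ⊓ (bᶜ ⇨ aᶜ) := rfl

theorem wimp_wimp (a c : N.Carrier) : N.wimp a (N.wimp a c) = (a ⇨ c) ⊓ (a ⊓ cᶜ ⇨ (a ⊓ cᶜ)ᶜ) := by
  have hneg : a ⊓ cᶜ ⇨ aᶜ = a ⊓ cᶜ ⇨ (a ⊓ cᶜ)ᶜ := N.himp_compl_of_le inf_le_left
  rw [N.wimp_eq, N.wimp_eq, N.himp_inf_distrib, N.himp_himp_self, N.himp_himp, hneg,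
    N.compl_inf (a ⇨ c), N.sup_himp_distrib, N.compl_himp_himp, N.compl_himp_himp, N.compl_compl,
    inf_comm cᶜ a, inf_idem, hneg, inf_assoc, inf_idem]

theorem wimp_wimp_wimp_wimp (x y z : N.Carrier) :
    N.wimp x (N.wimp x (N.wimp y (N.wimp y z))) =
      (x ⊓ y ⇨ z) ⊓ (x ⊓ y ⊓ zᶜ ⇨ (x ⊓ y ⊓ zᶜ)ᶜ) := by
  rw [N.wimp_wimp y z, N.wimp_wimp x]
  set u := y ⊓ zᶜ
  set B := (y ⇨ z) ⊓ (u ⇨ uᶜ)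
  have h₁ : x ⇨ B = (x ⊓ y ⇨ z) ⊓ (x ⊓ u ⇨ (x ⊓ u)ᶜ) := by
    rw [N.himp_inf_distrib, N.himp_himp, N.himp_himp_compl_self]
  have h₂ : x ⊓ Bᶜ ⇨ (x ⊓ Bᶜ)ᶜ = u ⊓ x ⇨ (u ⊓ x)ᶜ := by
    rw [inf_comm x, ← N.himp_himp_compl_self, N.compl_inf, N.sup_himp_distrib, N.compl_himp_himp,
      N.compl_himp_himp, N.compl_compl, inf_idem, inf_idem, N.himp_himp_compl_self]
  rw [h₁, h₂, inf_comm _ x, ← inf_assoc x, inf_assoc, inf_idem]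

end NelsonAlgebra

theorem nelson_B6 {A : Type*} (N : NelsonAlgebra A) (x y z : A) :
    N.wimp x (N.wimp x (N.wimp y (N.wimp y z))) =
      N.wimp (N.meet x y) (N.wimp (N.meet x y) z) :=
  (N.wimp_wimp_wimp_wimp x y z).trans (N.wimp_wimp (N.meet x y) z).symm
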